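/- arXiv:1810.04343 — 2 statements merged into one kernel-verified Lean document; each statement's English description precedes it below -/
import Mathlib

section
/- Let (X,d) be a metric space, x₀, x, y ∈ X, and let g(w,z) = log tanh d(w,z) for w ≠ z. Then for any sequence z_n with d(x₀,z_n) → ∞ (hence d(x,z_n), d(y,z_n) → ∞), the ratio g(y,z_n)/g(x,z_n) satisfies limsup_n g(y,z_n)/g(x,z_n) ≤ e^{2 d(x,y)}. -/
/-!
Since `log tanh t = -2 e^{-2t} (1 + o(1))` as `t → ∞`, the ratio `log tanh (t - c) / log tanh t`
tends to `e^{2c}`. As `log tanh` is negative and increasing on `(0, ∞)` and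
`d(y, z) ≥ d(x, z) - d(x, y)`, the ratio in the theorem is eventually at most this one with
`t = d(x, z)` and `c = d(x, y)`.
-/

open Filter Real Asymptotics Topology

namespace Real

theorem tanh_strictMono : StrictMono tanh := by
  intro s t hst
  by_contra! h
  have := artanh_le_artanh (neg_one_lt_tanh t) (tanh_lt_one s) h
  rw [artanh_tanh, artanh_tanh] at this
  linarith

theorem tanh_pos {t : ℝ} (ht : 0 < t) : 0 < tanh t := by
  simpa using tanh_strictMono ht

theorem tanh_nonneg {t : ℝ} (ht : 0 ≤ t) : 0 ≤ tanh t := by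
  simpa using tanh_strictMono.monotone ht

theorem log_tanh_neg {t : ℝ} (ht : 0 < t) : log (tanh t) < 0 :=
  log_neg (tanh_pos ht) (tanh_lt_one t)

theorem log_tanh_nonpos {t : ℝ} (ht : 0 ≤ t) : log (tanh t) ≤ 0 :=
  log_nonpos (tanh_nonneg ht) (tanh_lt_one t).le

theorem log_tanh_le_log_tanh {s t : ℝ} (hs : 0 < s) (hst : s ≤ t) :
    log (tanh s) ≤ log (tanh t) :=
  log_le_log (tanh_pos hs) (tanh_strictMono.monotone hst)

theorem one_sub_tanh (t : ℝ) : 1 - tanh t = 2 / (exp (2 * t) + 1) := by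
  have h2 : exp (2 * t) = exp t * exp t := by rw [← exp_add]; ring_nf
  have h1 : exp t * exp (-t) = 1 := by rw [← exp_add]; simp
  rw [tanh_eq_sinh_div_cosh, sinh_eq, cosh_eq, h2]
  field_simp
  linear_combination (2 * exp t) * h1

theorem isEquivalent_one_sub_tanh :
    (fun t => 1 - tanh t) ~[atTop] fun t => 2 * exp (-2 * t) := by
  refine isEquivalent_of_tendsto_one ?_
  have h : Tendsto (fun t : ℝ => 1 / (1 + exp (-2 * t))) atTop (𝓝 (1 / (1 + 0))) :=
    tendsto_const_nhds.div (tendsto_const_nhds.add (tendsto_exp_atBot.comp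
      (tendsto_id.const_mul_atTop_of_neg (by norm_num)))) (by norm_num)
  rw [add_zero, div_one] at h
  refine h.congr fun t => ?_
  have : exp (2 * t) * exp (-(2 * t)) = 1 := by rw [← exp_add]; simp
  simp only [Pi.div_apply, one_sub_tanh, neg_mul]
  field_simp
  linear_combination this

theorem isEquivalent_log_nhds_one : log ~[𝓝 1] fun w => w - 1 := by
  simpa using! (hasDerivAt_log one_ne_zero).isLittleO

theorem isEquivalent_log_tanh :
    (fun t => log (tanh t)) ~[atTop] fun t => -(2 * exp (-2 * t)) := by
  have h := isEquivalent_one_sub_tanh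
  have htanh : Tendsto tanh atTop (𝓝 1) := by
    have := h.symm.tendsto_nhds ((tendsto_exp_atBot.comp
      (tendsto_id.const_mul_atTop_of_neg (by norm_num))).const_mul 2)
    simpa using (tendsto_const_nhds (x := (1 : ℝ))).sub this
  refine (isEquivalent_log_nhds_one.comp_tendsto htanh).trans ?_
  convert h.neg using 1
  funext t
  simp

theorem tendsto_log_tanh_sub_div_log_tanh (c : ℝ) :
    Tendsto (fun t => log (tanh (t - c)) / log (tanh t)) atTop (𝓝 (exp (2 * c))) := by
  have h := (isEquivalent_log_tanh.comp_tendsto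
    (tendsto_atTop_add_const_right atTop (-c) tendsto_id)).div isEquivalent_log_tanh
  refine h.symm.tendsto_nhds (tendsto_const_nhds.congr fun t => ?_)
  simp only [Pi.div_apply, Function.comp_apply, id]
  rw [neg_div_neg_eq, mul_div_mul_left _ _ two_ne_zero, ← exp_sub]
  ring_nf

end Real

theorem limsup_log_tanh_div_log_tanh_le {ι : Type*} {l : Filter ι} [l.NeBot] {a b : ι → ℝ}
    {c : ℝ} (ha : Tendsto a l atTop) (hab : ∀ᶠ i in l, a i - c ≤ b i) :
    limsup (fun i => log (tanh (b i)) / log (tanh (a i))) l ≤ exp (2 * c) := by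
  have hlim := (tendsto_log_tanh_sub_div_log_tanh c).comp ha
  have hbound : ∀ᶠ i in l, 0 ≤ log (tanh (b i)) / log (tanh (a i)) ∧
      log (tanh (b i)) / log (tanh (a i)) ≤ log (tanh (a i - c)) / log (tanh (a i)) := by
    filter_upwards [ha.eventually_gt_atTop (max c 0), hab] with i hac hb
    have hc : 0 < a i - c := by linarith [le_max_left c 0]
    have ha0 : 0 < a i := by linarith [le_max_right c 0]
    exact ⟨div_nonneg_of_nonpos (log_tanh_nonpos (hc.le.trans hb)) (log_tanh_neg ha0).le,
      div_le_div_of_nonpos_of_le (log_tanh_neg ha0).le (log_tanh_le_log_tanh hc hb)⟩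
  calc limsup (fun i => log (tanh (b i)) / log (tanh (a i))) l
      ≤ limsup (fun i => log (tanh (a i - c)) / log (tanh (a i))) l :=
        limsup_le_limsup (hbound.mono fun _ h => h.2)
          (isCoboundedUnder_le_of_eventually_le l (hbound.mono fun _ h => h.1))
          hlim.isBoundedUnder_le
    _ = exp (2 * c) := hlim.limsup_eq

/-- With `g(w,z) = log tanh d(w,z)`, along any sequence `z_n` with `d(x₀,z_n) → ∞` one has
`limsup_n g(y,z_n)/g(x,z_n) ≤ e^{2 d(x,y)}`. -/
theorem stmt8 {X : Type*} [MetricSpace X] (x₀ x y : X) (z : ℕ → X)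
    (hz : Tendsto (fun n => dist x₀ (z n)) atTop atTop) :
    Filter.limsup
      (fun n => Real.log (Real.tanh (dist y (z n))) / Real.log (Real.tanh (dist x (z n))))
      atTop ≤ Real.exp (2 * dist x y) := by
  refine limsup_log_tanh_div_log_tanh_le ?_ (Eventually.of_forall fun n => ?_)
  · refine tendsto_atTop_mono (fun n => ?_) (tendsto_atTop_add_const_left atTop (-dist x₀ x) hz)
    linarith [dist_triangle x₀ x (z n)]
  · linarith [dist_triangle x y (z n)]
end

section
/- Let X be a set, d a metric on X, x₀ ∈ X, and suppose E : X × F → ℝ_{>0} satisfies Minsky's inequality i(G,H)² ≤ E(x,G)·E(x,H) for a symmetric function i : F × F → ℝ_{≥0}, and the quasi-invariance E(x,G) ≤ e^{2d(x₀,x)} E(x₀,G). Fix G, H ∈ F with the property that there is ε₀ > 0 with i(G,J)² + i(H,J)² ≥ ε₀ for all J in a distinguished set S ⊆ F, and suppose for each x ≠ x₀ there exists J ∈ S with E(x,J) = e^{−2d(x₀,x)}. Then ε₀ e^{2 d(x₀,x)} ≤ E(x,G) + E(x,H) ≤ (E(x₀,G)+E(x₀,H)) e^{2 d(x₀,x)}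 for all x ≠ x₀. -/
/-- Abstract version of inequality (8.3): from Minsky's inequality
`i(G,H)² ≤ E(x,G)E(x,H)`, the quasi-invariance `E(x,G) ≤ e^{2d(x₀,x)}E(x₀,G)`, the filling
property `i(G,J)² + i(H,J)² ≥ ε₀` for `J ∈ S`, and the existence (Teichmüller) for each
`x ≠ x₀` of `J ∈ S` with `E(x,J) = e^{-2d(x₀,x)}`, one gets
`ε₀ e^{2d(x₀,x)} ≤ E(x,G) + E(x,H) ≤ (E(x₀,G)+E(x₀,H)) e^{2d(x₀,x)}`. -/
theorem stmt10 {X F : Type*} [MetricSpace X] (x₀ : X)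
    (E : X → F → ℝ) (i : F → F → ℝ)
    (hEpos : ∀ x f, 0 < E x f)
    (hinonneg : ∀ f g, 0 ≤ i f g) (hisymm : ∀ f g, i f g = i g f)
    (hMinsky : ∀ x G H, (i G H) ^ 2 ≤ E x G * E x H)
    (hquasi : ∀ x G, E x G ≤ Real.exp (2 * dist x₀ x) * E x₀ G)
    (G H : F) (S : Set F) (ε₀ : ℝ) (hε : 0 < ε₀)
    (hfill : ∀ J ∈ S, ε₀ ≤ (i G J) ^ 2 + (i H J) ^ 2)
    (hTeich : ∀ x : X, x ≠ x₀ → ∃ J ∈ S, E x J = Real.exp (-2 * dist x₀ x))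
    (x : X) (hx : x ≠ x₀) :
    ε₀ * Real.exp (2 * dist x₀ x) ≤ E x G + E x H ∧
      E x G + E x H ≤ (E x₀ G + E x₀ H) * Real.exp (2 * dist x₀ x) := by

  obtain ⟨J, hJS, hJE⟩ := hTeich x hx
  have hexp : Real.exp (-2 * dist x₀ x) = (Real.exp (2 * dist x₀ x))⁻¹ := by
    rw [← Real.exp_neg]; ring_nf
  have hepos : (0:ℝ) < Real.exp (2 * dist x₀ x) := Real.exp_pos _
  constructor
  · have h1 : (i G J) ^ 2 ≤ E x G * Real.exp (-2 * dist x₀ x) := by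
      have := hMinsky x G J; rwa [hJE] at this
    have h2 : (i H J) ^ 2 ≤ E x H * Real.exp (-2 * dist x₀ x) := by
      have := hMinsky x H J; rwa [hJE] at this
    have h3 : ε₀ ≤ (E x G + E x H) * Real.exp (-2 * dist x₀ x) := by
      calc ε₀ ≤ (i G J) ^ 2 + (i H J) ^ 2 := hfill J hJS
        _ ≤ (E x G + E x H) * Real.exp (-2 * dist x₀ x) := by nlinarith
    rw [hexp] at h3
    calc ε₀ * Real.exp (2 * dist x₀ x)
        ≤ ((E x G + E x H) * (Real.exp (2 * dist x₀ x))⁻¹) * Real.exp (2 * dist x₀ x) := by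
          exact mul_le_mul_of_nonneg_right h3 hepos.le
      _ = E x G + E x H := by field_simp
  · have := hquasi x G
    have := hquasi x H
    nlinarith
end
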